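/- In any execution of the OTM abstract machine, each transaction name can be the source of at most one merge: once a Read2 or Write2 transition merges transaction k into transaction j (renaming every occurrence of k in the working memory Δ and in the thread family to j, with j ≠ k), the name k no longer occurs in any subsequent state of the execution, and hence no later transition can merge k into any transaction. Consequently, in the opacity graph of the corresponding history, every vertex has at most one outgoing merge-induced edge. -/

import Mathlib

/-!  A formalisation of the OTM (Open Transactional Memory) abstract machine
     of "Open Transactional Memory" (Figures 3–8), together with
     Guerraoui–Kapałka style histories and opacity graphs. -/

abbrev Loc : Type := ℕ
abbrev TrName : Type := ℕ
abbrev TId : Type := ℕ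

/-- Terms of the Haskell-like language with the OTM primitives (Fig. 3). -/
inductive Term : Type where
  | var : ℕ → Term
  | app : Term → Term → Term
  | lam : ℕ → Term → Term
  | loc : Loc → Term
  | tidT : TId → Term
  | chr : Char → Term
  | unit : Term
  | ret : Term → Term
  | bind : Term → Term → Term
  | throw : Term → Term
  | catchE : Term → Term → Term
  | putChar : Char → Term
  | getChar : Term
  | fork : Term → Term
  | atomic : Term → Term
  | isolated : Term → Term
  | retry : Term
  | orElse : Term → Term → Term
  | newOTVar : Term → Term
  | readOTVar : Loc → Term
  | writeOTVar : Loc → Term → Term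
  deriving DecidableEq

/-- Values (Fig. 3): everything except variables and applications. -/
def Term.isValue : Term → Bool
  | .var _ => false
  | .app _ _ => false
  | _ => true

/-- Pure term reductions `M → N` (Fig. 4), parameterised by the
    (otherwise unspecified) evaluation function `𝒱`. -/
inductive TermStep (V : Term → Option Term) : Term → Term → Prop where
  | eval {M N : Term} :
      M.isValue = false → V M = some N → N.isValue = true → TermStep V M N
  | bindVal {M N : Term} : TermStep V (.bind (.ret M) N) (.app N M)
  | bindRetry {M : Term} : TermStep V (.bind .retry M) .retry
  | bindThrow {M N : Term} : TermStep V (.bind (.throw N) M) (.throw N)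
  | catchRetry {M : Term} : TermStep V (.catchE .retry M) .retry
  | catchRet {M N : Term} : TermStep V (.catchE (.ret N) M) (.ret N)
  | catchThrow {M N : Term} : TermStep V (.catchE (.throw M) N) (.app N M)

/-- Evaluation contexts `𝔼 ::= [] | 𝔼 >>= M`: a context is the list of
    the second arguments of the enclosing binds. -/
abbrev Ctx : Type := List Term

/-- `plug E M` is `𝔼[M]`. -/
def plug (E : Ctx) (M : Term) : Term := E.foldl Term.bind M

/-- Threads: `⟨M⟩_t` (outside transactions) and `⟨M; N⟩_{t,k}`
    (inside transaction `k`, with continuation `N`). -/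
inductive Thread : Type where
  | plain : TId → Term → Thread
  | tx : TId → Term → Term → TrName → Thread
  deriving DecidableEq

def Thread.tid : Thread → TId
  | .plain t _ => t
  | .tx t _ _ _ => t

/-- Thread families, presented as lists (parallel composition modulo
    permutation is built into the step relation). -/
abbrev Family : Type := List Thread

def Family.tids (P : Family) : List TId := P.map Thread.tid

/-- The names of the active transactions of a family (`transactions(P)`). -/
def Family.txNames (P : Family) : List TrName :=
  P.filterMap fun T =>
    match T with
    | .tx _ _ _ k => some k
    | .plain _ _ => none

/-- The forest `Ψ` of thread identifiers. -/
structure Psi : Type where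
  nodes : Set TId
  parent : TId → Option TId

def Psi.addRoot (ψ : Psi) (t : TId) : Psi :=
  ⟨insert t ψ.nodes, ψ.parent⟩

/-- `add_child(t, t', Ψ)`. -/
def Psi.addChild (ψ : Psi) (t t' : TId) : Psi :=
  ⟨insert t' ψ.nodes, fun u => if u = t' then some t else ψ.parent u⟩

/-- `ψ.rootOf t r` : `r = root(t, Ψ)`. -/
def Psi.rootOf (ψ : Psi) (t r : TId) : Prop :=
  Relation.ReflTransGen (fun a b => ψ.parent a = some b) t r ∧ ψ.parent r = none

open Classical in
/-- `remove(r, Ψ)`: remove the whole tree rooted at `r`. -/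
noncomputable def Psi.remove (ψ : Psi) (r : TId) : Psi :=
  ⟨{t ∈ ψ.nodes | ¬ ψ.rootOf t r}, fun t => if ψ.rootOf t r then none else ψ.parent t⟩

/-- The memory `Σ = ⟨Θ, Δ, Ψ⟩` (together with the supply `used` of
    transaction names already used, guaranteeing freshness of new names). -/
structure Mem : Type where
  heap : Loc → Option Term
  work : Loc → Option (Term × TrName)
  psi : Psi
  used : Set TrName

/-- Machine states `(Σ; P)`. -/
structure MState : Type where
  mem : Mem
  threads : Family

/-- Pointwise update of a partial function. -/
def updFn {α : Type} (f : Loc → Option α) (r : Loc) (v : α) : Loc → Option α :=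
  fun s => if s = r then some v else f s

/-- `Δ[k ↦ j]` : rename every claim of transaction `k` into `j` (Fig. 8). -/
def renameWork (Δ : Loc → Option (Term × TrName)) (k j : TrName) :
    Loc → Option (Term × TrName) :=
  fun r => (Δ r).map fun p => if p.2 = k then (p.1, j) else p

def Thread.renameTx (T : Thread) (k j : TrName) : Thread :=
  match T with
  | .tx t M N k' => if k' = k then .tx t M N j else .tx t M N k'
  | .plain t M => .plain t M

/-- `P[k ↦ j]` (Fig. 8). -/
def Family.renameTx (P : Family) (k j : TrName) : Family :=
  P.map (Thread.renameTx · k j)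

/-- `cleanup(k, Σ)` (Fig. 8). -/
def cleanup (k : TrName) (Δ : Loc → Option (Term × TrName)) :
    Loc → Option (Term × TrName) := fun r =>
  match Δ r with
  | some (M, k') => if k' = k then none else some (M, k')
  | none => none

/-- `commit(k, Σ)` (Fig. 8). -/
def commitMem (k : TrName) (Θ : Loc → Option Term)
    (Δ : Loc → Option (Term × TrName)) : Loc → Option Term := fun r =>
  match Δ r with
  | some (M, k') => if k' = k then some M else Θ r
  | none => Θ r

/-- `leak(k, Σ)` (Fig. 8). -/
def leakMem (k : TrName) (Θ : Loc → Option Term)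
    (Δ : Loc → Option (Term × TrName)) : Loc → Option Term := fun r =>
  match Θ r with
  | some M => some M
  | none =>
    match Δ r with
    | some (M, k') => if k' = k then some M else none
    | none => none

/-- Operations recorded in histories (reads, writes, commits, aborts and,
    for OTM, explicit merges of one transaction into another). -/
inductive Op : Type where
  | read : TrName → Loc → Term → Op
  | write : TrName → Loc → Term → Op
  | commit : TrName → Op
  | abort : TrName → Op
  | merge : TrName → TrName → Op
  deriving DecidableEq

/-- Histories: time-ordered sequences of operations. -/
abbrev History : Type := List Op

/-- Transition labels `β` (Figs. 5–7). -/
inductive Label : Type where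
  | tau : Label
  | inpC : Char → Label
  | outC : Char → Label
  | newT : TrName → Label
  | co : TrName → Label
  | ab : TrName → TId → Term → Label
  | abBar : TrName → TId → Term → Label
  deriving DecidableEq

/-- `transaction(β)` (Fig. 8). -/
def Label.txName : Label → Option TrName
  | .newT k => some k
  | .co k => some k
  | .ab k _ _ => some k
  | .abBar k _ _ => some k
  | _ => none

mutual
  /-- The state transitions `(Σ; P) --β--> (Σ'; P')` of the OTM abstract
      machine (Figs. 5, 6 and 7), instrumented with the list of history
      operations the transition issues. -/
  inductive Step (V : Term → Option Term) :
      MState → Label → List Op → MState → Prop where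
    /- structural congruence: `∥` is commutative and associative -/
    | permC {m m' : Mem} {P Q P' Q' : Family} {β : Label} {ops : List Op} :
        List.Perm P Q → List.Perm P' Q' →
        Step V ⟨m, P⟩ β ops ⟨m', P'⟩ → Step V ⟨m, Q⟩ β ops ⟨m', Q'⟩
    /- IO transitions (Fig. 5) -/
    | inChar {m : Mem} {P : Family} {E : Ctx} {t : TId} {c : Char} :
        Step V ⟨m, .plain t (plug E .getChar) :: P⟩ (.inpC c) []
               ⟨m, .plain t (plug E (.ret (.chr c))) :: P⟩
    | outChar {m : Mem} {P : Family} {E : Ctx} {t : TId} {c : Char} :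
        Step V ⟨m, .plain t (plug E (.putChar c)) :: P⟩ (.outC c) []
               ⟨m, .plain t (plug E (.ret .unit)) :: P⟩
    | termIO {m : Mem} {P : Family} {E : Ctx} {t : TId} {M N : Term} :
        TermStep V M N →
        Step V ⟨m, .plain t (plug E M) :: P⟩ .tau []
               ⟨m, .plain t (plug E N) :: P⟩
    | forkIO {m : Mem} {P : Family} {E : Ctx} {t t' : TId} {M : Term} :
        t' ∉ Family.tids (.plain t (plug E (.fork M)) :: P) →
        Step V ⟨m, .plain t (plug E (.fork M)) :: P⟩ .tau []
               ⟨{m with psi := m.psi.addRoot t'},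
                .plain t (plug E (.ret (.tidT t'))) :: .plain t' M :: P⟩
    /- transactional τ-transitions (Fig. 6) -/
    | termT {m : Mem} {P : Family} {E : Ctx} {t : TId} {k : TrName} {M M' N : Term} :
        TermStep V M M' →
        Step V ⟨m, .tx t (plug E M) N k :: P⟩ .tau []
               ⟨m, .tx t (plug E M') N k :: P⟩
    | forkT {m : Mem} {P : Family} {E : Ctx} {t t' : TId} {k : TrName} {M N : Term} :
        t' ∉ Family.tids (.tx t (plug E (.fork M)) N k :: P) →
        Step V ⟨m, .tx t (plug E (.fork M)) N k :: P⟩ .tau []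
               ⟨{m with psi := m.psi.addChild t t'},
                .tx t (plug E (.ret (.tidT t'))) N k :: .tx t' M (.ret .unit) k :: P⟩
    | newVar {m : Mem} {P : Family} {E : Ctx} {t : TId} {k : TrName} {M N : Term} {r : Loc} :
        m.heap r = none → m.work r = none →
        Step V ⟨m, .tx t (plug E (.newOTVar M)) N k :: P⟩ .tau [.write k r M]
               ⟨{m with work := updFn m.work r (M, k)},
                .tx t (plug E (.ret (.loc r))) N k :: P⟩
    | read1 {m : Mem} {P : Family} {E : Ctx} {t : TId} {k : TrName} {M N : Term} {r : Loc} :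
        m.work r = none → m.heap r = some M →
        Step V ⟨m, .tx t (plug E (.readOTVar r)) N k :: P⟩ .tau [.read k r M]
               ⟨{m with work := updFn m.work r (M, k)},
                .tx t (plug E (.ret M)) N k :: P⟩
    | read2 {m : Mem} {P : Family} {E : Ctx} {t : TId} {k j : TrName} {M N : Term} {r : Loc} :
        m.work r = some (M, j) →
        Step V ⟨m, .tx t (plug E (.readOTVar r)) N k :: P⟩ .tau
               (if k = j then [.read k r M] else [.merge k j, .read j r M])
               ⟨{m with work := renameWork m.work k j},
                Family.renameTx (.tx t (plug E (.ret M)) N k :: P) k j⟩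
    | write1 {m : Mem} {P : Family} {E : Ctx} {t : TId} {k : TrName} {M N : Term} {r : Loc} :
        m.work r = none →
        Step V ⟨m, .tx t (plug E (.writeOTVar r M)) N k :: P⟩ .tau [.write k r M]
               ⟨{m with work := updFn m.work r (M, k)},
                .tx t (plug E (.ret .unit)) N k :: P⟩
    | write2 {m : Mem} {P : Family} {E : Ctx} {t : TId} {k j : TrName} {M M₀ N : Term} {r : Loc} :
        m.work r = some (M₀, j) →
        Step V ⟨m, .tx t (plug E (.writeOTVar r M)) N k :: P⟩ .tau
               (if k = j then [.write k r M] else [.merge k j, .write j r M])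
               ⟨{m with work := updFn (renameWork m.work k j) r (M, j)},
                Family.renameTx (.tx t (plug E (.ret .unit)) N k :: P) k j⟩
    | orElse1 {m m' : Mem} {P Q₁ Q₂ : Family} {E : Ctx} {t : TId} {k j : TrName}
        {M M' N N' R : Term} {ops : List Op} :
        (R = .ret N' ∨ R = .throw N') →
        StepTauStar V ⟨m, .tx t M (.ret .unit) k :: P⟩ ops
                       ⟨m', Q₁ ++ .tx t R (.ret .unit) j :: Q₂⟩ →
        Step V ⟨m, .tx t (plug E (.orElse M M')) N k :: P⟩ .tau ops
               ⟨m', Q₁ ++ .tx t (plug E R) N j :: Q₂⟩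
    | orElse2 {m m' : Mem} {P Q₁ Q₂ : Family} {E : Ctx} {t : TId} {k j : TrName}
        {M M' N : Term} {ops : List Op} :
        StepTauStar V ⟨m, .tx t M (.ret .unit) k :: P⟩ ops
                       ⟨m', Q₁ ++ .tx t .retry (.ret .unit) j :: Q₂⟩ →
        Step V ⟨m, .tx t (plug E (.orElse M M')) N k :: P⟩ .tau []
               ⟨m, .tx t (plug E M') N k :: P⟩
    | isolatedR {m m' : Mem} {P Q₁ Q₂ : Family} {E : Ctx} {t : TId} {k j : TrName}
        {M N N' R : Term} {ops : List Op} :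
        (R = .ret N' ∨ R = .throw N') →
        StepTauStar V ⟨m, .tx t M (.ret .unit) k :: P⟩ ops
                       ⟨m', Q₁ ++ .tx t R (.ret .unit) j :: Q₂⟩ →
        Step V ⟨m, .tx t (plug E (.isolated M)) N k :: P⟩ .tau ops
               ⟨m', Q₁ ++ .tx t (plug E R) N j :: Q₂⟩
    /- transaction management transitions (Fig. 7) -/
    | newTx {m : Mem} {t : TId} {M N : Term} {k : TrName} :
        k ∉ m.used →
        Step V ⟨m, [.plain t (.bind (.atomic M) N)]⟩ (.newT k) []
               ⟨{m with used := insert k m.used}, [.tx t M N k]⟩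
    | commitTx {m : Mem} {t : TId} {M N : Term} {k : TrName} :
        Step V ⟨m, [.tx t (.ret M) N k]⟩ (.co k) [.commit k]
               ⟨{m with heap := commitMem k m.heap m.work,
                        work := cleanup k m.work},
                [.plain t (.bind (.ret M) N)]⟩
    | abort1 {m : Mem} {t : TId} {M N : Term} {k : TrName} {r : TId} :
        m.psi.rootOf t r →
        Step V ⟨m, [.tx t (.throw M) N k]⟩ (.ab k t M) [.abort k]
               ⟨{m with heap := leakMem k m.heap m.work,
                        work := cleanup k m.work,
                        psi := m.psi.remove r},
                [.plain t (.bind (.throw M) N)]⟩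
    | abort2 {m : Mem} {t t' : TId} {M M' N : Term} {k : TrName} {r : TId} :
        m.psi.rootOf t r → m.psi.rootOf t' r →
        Step V ⟨m, [.tx t' M' N k]⟩ (.abBar k t M) []
               ⟨{m with heap := leakMem k m.heap m.work,
                        work := cleanup k m.work,
                        psi := m.psi.remove r},
                [.plain t' (.bind (.throw M) N)]⟩
    | abort3 {m : Mem} {t t' : TId} {M M' N : Term} {k : TrName} {r : TId} :
        m.psi.rootOf t r → ¬ m.psi.rootOf t' r →
        Step V ⟨m, [.tx t' M' N k]⟩ (.abBar k t M) []
               ⟨{m with heap := leakMem k m.heap m.work,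
                        work := cleanup k m.work,
                        psi := m.psi.remove r},
                [.plain t' .retry]⟩
    | mcastAb {m m' : Mem} {P P' Q Q' : Family} {k : TrName} {t : TId} {M : Term}
        {ops₁ ops₂ : List Op} :
        Step V ⟨m, P⟩ (.ab k t M) ops₁ ⟨m', P'⟩ →
        Step V ⟨m, Q⟩ (.abBar k t M) ops₂ ⟨m', Q'⟩ →
        Step V ⟨m, P ++ Q⟩ (.ab k t M) (ops₁ ++ ops₂) ⟨m', P' ++ Q'⟩
    | mcastCo {m m' : Mem} {P P' Q Q' : Family} {k : TrName} {ops₁ ops₂ : List Op} :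
        Step V ⟨m, P⟩ (.co k) ops₁ ⟨m', P'⟩ →
        Step V ⟨m, Q⟩ (.co k) ops₂ ⟨m', Q'⟩ →
        Step V ⟨m, P ++ Q⟩ (.co k) ((ops₁ ++ ops₂).dedup) ⟨m', P' ++ Q'⟩
    | mcastGroup {m m' : Mem} {P P' Q : Family} {β : Label} {k : TrName} {ops : List Op} :
        Step V ⟨m, P⟩ β ops ⟨m', P'⟩ →
        β.txName = some k → k ∉ Family.txNames Q →
        Step V ⟨m, P ++ Q⟩ β ops ⟨m', P' ++ Q⟩

  /-- Reflexive-transitive closure of internal (`τ`) transitions,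
      accumulating the issued operations. -/
  inductive StepTauStar (V : Term → Option Term) :
      MState → List Op → MState → Prop where
    | refl (s : MState) : StepTauStar V s [] s
    | cons {s₁ s₂ s₃ : MState} {ops₁ ops₂ : List Op} :
        Step V s₁ .tau ops₁ s₂ → StepTauStar V s₂ ops₂ s₃ →
        StepTauStar V s₁ (ops₁ ++ ops₂) s₃
end

/-- Executions of the abstract machine, together with the history
    (sequence of issued operations) they generate. -/
inductive Exec (V : Term → Option Term) : MState → History → MState → Prop where
  | refl (s : MState) : Exec V s [] s
  | step {s₁ s₂ s₃ : MState} {β : Label} {ops : List Op} {H : History} :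
      Step V s₁ β ops s₂ → Exec V s₂ H s₃ → Exec V s₁ (ops ++ H) s₃

/-- The initial state of an OTM program `M` run by a main thread `t`. -/
def initState (M : Term) (t : TId) : MState :=
  ⟨⟨fun _ => none, fun _ => none, ⟨{t}, fun _ => none⟩, ∅⟩, [.plain t M]⟩

/-- `H` is a history describing an execution of an OTM program. -/
def OTMHistory (H : History) : Prop :=
  ∃ (V : Term → Option Term) (M : Term) (t : TId) (s : MState),
    Exec V (initState M t) H s

/-! ### Histories, local operations and opacity graphs (Guerraoui–Kapałka) -/

/-- The transaction issuing an operation. -/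
def Op.tx : Op → TrName
  | .read k _ _ => k
  | .write k _ _ => k
  | .commit k => k
  | .abort k => k
  | .merge k _ => k

def Op.loc? : Op → Option Loc
  | .read _ r _ => some r
  | .write _ r _ => some r
  | _ => none

def Op.isWrite : Op → Bool
  | .write _ _ _ => true
  | _ => false

/-- `op` is an operation by transaction `k` on location `r`. -/
def Op.touches (op : Op) (k : TrName) (r : Loc) : Bool :=
  op.tx == k && op.loc? == some r

/-- The transactions occurring in a history. -/
def History.txs (H : History) : List TrName :=
  H.flatMap fun op =>
    match op with
    | .merge k j => [k, j]
    | op => [op.tx]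

/-- The last operation by `k` on `r` strictly before position `i`. -/
def History.prevOn (H : History) (k : TrName) (r : Loc) (i : ℕ) : Option Op :=
  ((H.take i).filter (fun op => op.touches k r)).getLast?

/-- The first operation by `k` on `r` strictly after position `i`. -/
def History.nextOn (H : History) (k : TrName) (r : Loc) (i : ℕ) : Option Op :=
  ((H.drop (i + 1)).filter (fun op => op.touches k r)).head?

/-- The operation at position `i` of `H` is local: a read whose previous
    operation by the same transaction on the same location is a write, or a
    write whose next operation by the same transaction on the same location
    is a write. -/
def History.localIdx (H : History) (i : ℕ) : Bool :=
  match H[i]? with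
  | some (.read k r _) =>
    match H.prevOn k r i with
    | some op => op.isWrite
    | none => false
  | some (.write k r _) =>
    match H.nextOn k r i with
    | some op => op.isWrite
    | none => false
  | _ => false

/-- `nonlocal(H)`: the longest sub-history of `H` without local operations. -/
def History.nonlocal (H : History) : History :=
  ((List.range H.length).filter (fun i => ! H.localIdx i)).filterMap
    (fun i => H[i]?)

def History.committed (H : History) (k : TrName) : Prop := Op.commit k ∈ H

def History.aborted (H : History) (k : TrName) : Prop := Op.abort k ∈ H

/-- A vertex/transaction is red iff it is running or aborted,
    i.e. not committed. -/
def History.red (H : History) (k : TrName) : Prop := ¬ H.committed k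

/-- `k` is live (running) in `H`. -/
def History.live (H : History) (k : TrName) : Prop :=
  k ∈ H.txs ∧ ¬ H.committed k ∧ ¬ H.aborted k

/-- `a ≺_H b`: `a` becomes committed or aborted in `H` before `b` issues
    its first operation. -/
def History.happensBefore (H : History) (a b : TrName) : Prop :=
  ∃ i, (H[(i : ℕ)]? = some (.commit a) ∨ H[(i : ℕ)]? = some (.abort a)) ∧
    ∀ j op, H[(j : ℕ)]? = some op → op.tx = b → i < j

/-- `k` reads (the value of) location `r` from `k'` in `H`. -/
def History.readsFromAt (H : History) (k k' : TrName) (r : Loc) : Prop :=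
  ∃ i j v, i < j ∧
    H[(i : ℕ)]? = some (.write k' r v) ∧
    H[(j : ℕ)]? = some (.read k r v) ∧
    ∀ l op, i < l → l < j → H[(l : ℕ)]? = some op →
      op.isWrite = true → op.loc? ≠ some r

/-- `k` reads something written by `k'` (merges are dependencies of this
    kind: a merge amounts to reading a fresh location written by `k'`). -/
def History.readsFrom (H : History) (k k' : TrName) : Prop :=
  (∃ r, H.readsFromAt k k' r) ∨ Op.merge k k' ∈ H

/-- The edge relation of the opacity graph `OPG(H, ≪)` (cases (a)–(d)). -/
def OPGEdge (H : History) (lt : TrName → TrName → Prop) (k k' : TrName) : Prop :=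
  H.happensBefore k' k
  ∨ H.readsFrom k k'
  ∨ (lt k' k ∧ ∃ r, (∃ v, Op.read k' r v ∈ H) ∧ (∃ v, Op.write k r v ∈ H))
  ∨ (H.committed k' ∧
      ∃ r k'', lt k' k'' ∧ (∃ v, Op.write k' r v ∈ H) ∧ H.readsFromAt k'' k r)

/-- An edge of `OPG(H, ≪)` is red iff case (b) applies. -/
def OPGRedEdge (H : History) (k k' : TrName) : Prop := H.readsFrom k k'

/-- `OPG(H, ≪)` is well-formed: all edges leaving red vertices are red. -/
def OPGWellFormed (H : History) (lt : TrName → TrName → Prop) : Prop :=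
  ∀ k k', OPGEdge H lt k k' → H.red k → OPGRedEdge H k k'

/-- `OPG(H, ≪)` is acyclic. -/
def OPGAcyclic (H : History) (lt : TrName → TrName → Prop) : Prop :=
  ∀ k, ¬ Relation.TransGen (OPGEdge H lt) k k

/-- `lt` is a total order on the transactions of `H`. -/
def TotalOrderOn (H : History) (lt : TrName → TrName → Prop) : Prop :=
  (∀ k, ¬ lt k k) ∧ (∀ a b c, lt a b → lt b c → lt a c) ∧
  (∀ k, k ∈ H.txs → ∀ k', k' ∈ H.txs → k ≠ k' → lt k k' ∨ lt k' k)

/-- `complete(H)`: `H` extended with a commit or an abort for every live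
    transaction of `H`. -/
def IsCompletion (H H' : History) : Prop :=
  ∃ C : History, H' = H ++ C ∧
    (∀ op ∈ C, (∃ k, op = Op.commit k ∨ op = Op.abort k) ∧ H.live op.tx) ∧
    (∀ k, H.live k → ∃ op ∈ C, Op.tx op = k) ∧
    C.Pairwise (fun a b => Op.tx a ≠ Op.tx b)

/-- Two histories are equivalent: same operations, and each transaction
    issues the same sequence of operations in both. -/
def EquivHist (S H : History) : Prop :=
  S.Perm H ∧ ∀ k, S.filter (fun op => op.tx == k) = H.filter (fun op => op.tx == k)

/-- A history is sequential if its happens-before relation is total. -/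
def SequentialHist (S : History) : Prop :=
  ∀ k, k ∈ S.txs → ∀ k', k' ∈ S.txs → k ≠ k' →
    S.happensBefore k k' ∨ S.happensBefore k' k

/-- Local consistency: every local read is preceded by a write (by the same
    transaction, on the same location) writing the read value. -/
def LocallyConsistent (H : History) : Prop :=
  ∀ i k r v, H[i]? = some (.read k r v) → H.localIdx i = true →
    H.prevOn k r i = some (.write k r v)

/-- Consistency of a history. -/
def Consistent (H : History) : Prop :=
  LocallyConsistent H ∧
  ∀ k r v, Op.read k r v ∈ H.nonlocal → ∃ k', Op.write k' r v ∈ H.nonlocal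

/-! ### STATEMENT 5 -/

/-- `k` occurs in state `s` (as the transaction of a thread or as the owner
    of a claimed location). -/
def OccursIn (k : TrName) (s : MState) : Prop :=
  k ∈ Family.txNames s.threads ∨ ∃ r M, s.mem.work r = some (M, k)
/-!
Transaction names are drawn from the supply `used`. Every name occurring in a reachable state
has been issued, and a name that has been issued but no longer occurs (a *retired* name) never
reappears: the only transition that introduces a name (`newTx`) picks an unissued one, and a
merge of `k` into `j` renames into a name `j` that already occurs. A merge of `k` into `j ≠ k`
renames every occurrence of `k` away, so it retires `k`, whereas a merge can only have a source
that is not retired. Hence after its first merge `k` never occurs and is never merged again.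
-/

def Retired (k : TrName) (s : MState) : Prop := k ∈ s.mem.used ∧ ¬ OccursIn k s

def NamesIssued (s : MState) : Prop := ∀ k, OccursIn k s → k ∈ s.mem.used

def OnlyFreshNames (s s' : MState) : Prop :=
  s.mem.used ⊆ s'.mem.used ∧
    ∀ k, OccursIn k s' → OccursIn k s ∨ k ∈ s'.mem.used \ s.mem.used

def MergesRetireSource (s : MState) (ops : List Op) (s' : MState) : Prop :=
  ∀ k j, Op.merge k j ∈ ops →
    ¬ Retired k s ∧ Retired k s' ∧ ∀ j', Op.merge k j' ∈ ops → j' = j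

@[simp] lemma Family.txNames_nil : Family.txNames [] = [] := rfl

@[simp] lemma Family.txNames_cons_tx (t : TId) (M N : Term) (k : TrName) (P : Family) :
    Family.txNames (.tx t M N k :: P) = k :: Family.txNames P := rfl

@[simp] lemma Family.txNames_cons_plain (t : TId) (M : Term) (P : Family) :
    Family.txNames (.plain t M :: P) = Family.txNames P := rfl

@[simp] lemma Family.txNames_append (P Q : Family) :
    Family.txNames (P ++ Q) = Family.txNames P ++ Family.txNames Q :=
  List.filterMap_append

lemma Family.mem_txNames_renameTx {P : Family} {k j c : TrName}
    (h : c ∈ Family.txNames (Family.renameTx P k j)) :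
    c = j ∨ c ∈ Family.txNames P ∧ c ≠ k := by
  induction P with
  | nil => simp [Family.renameTx, Family.txNames] at h
  | cons T P ih =>
    cases T with
    | plain t M => simpa using ih (by simpa [Family.renameTx, Thread.renameTx] using h)
    | tx t M N k' =>
      by_cases hk' : k' = k <;>
        simp only [Family.renameTx, List.map_cons, Thread.renameTx, hk', if_true, if_false,
          Family.txNames_cons_tx, List.mem_cons] at h ⊢
      · rcases h with h | h
        · exact .inl h
        · exact (ih h).imp_right fun h' => ⟨.inr h'.1, h'.2⟩
      · rcases h with h | h
        · exact .inr ⟨.inl h, h ▸ hk'⟩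
        · exact (ih h).imp_right fun h' => ⟨.inr h'.1, h'.2⟩

lemma renameWork_eq_some {Δ : Loc → Option (Term × TrName)} {k j c : TrName} {r : Loc}
    {M : Term} (h : renameWork Δ k j r = some (M, c)) :
    c = j ∨ Δ r = some (M, c) ∧ c ≠ k := by
  obtain ⟨⟨M', c'⟩, hr, hp⟩ := Option.map_eq_some_iff.1 h
  by_cases hc' : c' = k <;> simp only [hc', if_true, if_false, Prod.mk.injEq] at hp
  · exact .inl hp.2.symm
  · exact .inr ⟨hp.1 ▸ hp.2 ▸ hr, hp.2 ▸ hc'⟩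

lemma cleanup_eq_some {Δ : Loc → Option (Term × TrName)} {k : TrName} {r : Loc}
    {p : Term × TrName} (h : cleanup k Δ r = some p) : Δ r = some p := by
  unfold cleanup at h
  rcases hΔ : Δ r with _ | ⟨M, c⟩ <;> rw [hΔ] at h
  · exact h
  · simp only at h
    split_ifs at h
    exact h

lemma occursIn_congr_threads {m : Mem} {P Q : Family}
    (h : ∀ k, k ∈ Family.txNames P ↔ k ∈ Family.txNames Q) {k : TrName} :
    OccursIn k ⟨m, P⟩ ↔ OccursIn k ⟨m, Q⟩ :=
  or_congr (h k) Iff.rfl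

lemma occursIn_append {m : Mem} {P Q : Family} {k : TrName} :
    OccursIn k ⟨m, P ++ Q⟩ ↔ OccursIn k ⟨m, P⟩ ∨ OccursIn k ⟨m, Q⟩ := by
  simp only [OccursIn, Family.txNames_append, List.mem_append]
  tauto

lemma occursIn_updFn {m : Mem} {P : Family} {r : Loc} {M : Term} {j c : TrName}
    (h : OccursIn c ⟨{m with work := updFn m.work r (M, j)}, P⟩) :
    c = j ∨ OccursIn c ⟨m, P⟩ := by
  rcases h with h | ⟨r', M', hr'⟩
  · exact .inr (.inl h)
  · simp only [updFn] at hr'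
    split_ifs at hr'
    · exact .inl (Prod.ext_iff.1 (Option.some_injective _ hr')).2.symm
    · exact .inr (.inr ⟨r', M', hr'⟩)

lemma occursIn_rename {m : Mem} {P : Family} {k j c : TrName}
    (h : OccursIn c ⟨{m with work := renameWork m.work k j}, Family.renameTx P k j⟩) :
    c = j ∨ OccursIn c ⟨m, P⟩ ∧ c ≠ k := by
  rcases h with h | ⟨r, M, hr⟩
  · exact (Family.mem_txNames_renameTx h).imp_right fun h' => ⟨.inl h'.1, h'.2⟩
  · exact (renameWork_eq_some hr).imp_right fun h' => ⟨.inr ⟨r, M, h'.1⟩, h'.2⟩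

lemma not_occursIn_rename {m : Mem} {P : Family} {k j : TrName} (hjk : j ≠ k) :
    ¬ OccursIn k ⟨{m with work := renameWork m.work k j}, Family.renameTx P k j⟩ :=
  fun h => (occursIn_rename h).elim (fun h => hjk h.symm) fun h => h.2 rfl

namespace OnlyFreshNames

variable {s₁ s₂ s₃ : MState}

lemma refl (s : MState) : OnlyFreshNames s s :=
  ⟨subset_rfl, fun _ hk => .inl hk⟩

lemma trans (h₁₂ : OnlyFreshNames s₁ s₂) (h₂₃ : OnlyFreshNames s₂ s₃) :
    OnlyFreshNames s₁ s₃ := by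
  refine ⟨h₁₂.1.trans h₂₃.1, fun k hk => ?_⟩
  rcases h₂₃.2 k hk with hk₂ | ⟨hk₃, hk₂⟩
  · exact (h₁₂.2 k hk₂).imp_right fun h => ⟨h₂₃.1 h.1, h.2⟩
  · exact .inr ⟨hk₃, fun hk₁ => hk₂ (h₁₂.1 hk₁)⟩

lemma of_occursIn (hu : s₂.mem.used = s₁.mem.used)
    (h : ∀ k, OccursIn k s₂ → OccursIn k s₁) : OnlyFreshNames s₁ s₂ :=
  ⟨hu.symm.subset, fun k hk => .inl (h k hk)⟩

lemma congr_threads {m m' : Mem} {P Q P' Q' : Family}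
    (h : ∀ k, k ∈ Family.txNames P ↔ k ∈ Family.txNames Q)
    (h' : ∀ k, k ∈ Family.txNames P' ↔ k ∈ Family.txNames Q')
    (hP : OnlyFreshNames ⟨m, P⟩ ⟨m', P'⟩) : OnlyFreshNames ⟨m, Q⟩ ⟨m', Q'⟩ := by
  simpa only [OnlyFreshNames, occursIn_congr_threads h, occursIn_congr_threads h'] using hP

lemma retired (h : OnlyFreshNames s₁ s₂) {k : TrName} (hk : Retired k s₁) : Retired k s₂ :=
  ⟨h.1 hk.1, fun hk₂ => (h.2 k hk₂).elim hk.2 fun h' => h'.2 hk.1⟩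

lemma namesIssued (h : OnlyFreshNames s₁ s₂) (hs₁ : NamesIssued s₁) : NamesIssued s₂ :=
  fun k hk => (h.2 k hk).elim (fun hk₁ => h.1 (hs₁ k hk₁)) And.left

end OnlyFreshNames

theorem Step.onlyFreshNames {V : Term → Option Term} {s s' : MState} {β : Label}
    {ops : List Op} (h : Step V s β ops s') : OnlyFreshNames s s' := by
  induction h using Step.rec (motive_2 := fun s _ s' _ => OnlyFreshNames s s') with
  | permC hPQ hPQ' _ ih =>
    exact ih.congr_threads (fun _ => (hPQ.filterMap _).mem_iff) fun _ => (hPQ'.filterMap _).mem_iff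
  | forkT =>
    refine .of_occursIn rfl fun c hc => ?_
    simpa [OccursIn] using hc
  | newVar | read1 | write1 =>
    refine .of_occursIn rfl fun c hc => ?_
    exact (occursIn_updFn hc).elim (fun h => .inl (by simp [h])) id
  | @read2 m P E t k j M N r hr =>
    refine .of_occursIn rfl fun c hc => ?_
    exact (occursIn_rename hc).elim (fun h => .inr ⟨r, M, h ▸ hr⟩) And.left
  | @write2 m P E t k j M M₀ N r hr =>
    refine .of_occursIn rfl fun c hc => ?_
    rcases occursIn_updFn (m := {m with work := renameWork m.work k j}) hc with hcj | hc
    · exact .inr ⟨r, M₀, hcj ▸ hr⟩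
    · exact (occursIn_rename hc).elim (fun h => .inr ⟨r, M₀, h ▸ hr⟩) And.left
  | orElse1 _ _ ih | isolatedR _ _ ih => exact ih.congr_threads (fun _ => Iff.rfl) (by simp)
  | @newTx m t M N k hk =>
    refine ⟨Set.subset_insert _ _, fun c hc => ?_⟩
    rcases hc with hc | hc
    · obtain rfl : c = k := by simpa using hc
      exact .inr ⟨Set.mem_insert c _, hk⟩
    · exact .inl (.inr hc)
  | commitTx | abort1 | abort2 | abort3 =>
    refine .of_occursIn rfl fun c hc => ?_
    rcases hc with hc | ⟨r, M, hr⟩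
    · simp at hc
    · exact .inr ⟨r, M, cleanup_eq_some hr⟩
  | mcastAb _ _ ih₁ ih₂ | mcastCo _ _ ih₁ ih₂ =>
    refine ⟨ih₁.1, fun c hc => ?_⟩
    rcases occursIn_append.1 hc with hc | hc
    · exact (ih₁.2 c hc).imp_left (occursIn_append.2 ∘ .inl)
    · exact (ih₂.2 c hc).imp_left (occursIn_append.2 ∘ .inr)
  | mcastGroup _ _ _ ih =>
    refine ⟨ih.1, fun c hc => ?_⟩
    rcases occursIn_append.1 hc with hc | hc | hc
    · exact (ih.2 c hc).imp_left (occursIn_append.2 ∘ .inl)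
    · exact .inl (occursIn_append.2 (.inr (.inl hc)))
    · exact (ih.2 c (.inr hc)).imp_left (occursIn_append.2 ∘ .inl)
  | refl s => exact .refl s
  | cons _ _ ih₁ ih₂ => exact ih₁.trans ih₂
  | _ => exact .of_occursIn rfl fun _ => id

theorem Step.eq_tau_of_merge_mem {V : Term → Option Term} {s s' : MState} {β : Label}
    {ops : List Op} (h : Step V s β ops s') {k j : TrName} (hkj : Op.merge k j ∈ ops) :
    β = .tau := by
  induction h using Step.rec (motive_2 := fun _ _ _ _ => True) with
  | permC _ _ _ ih | mcastGroup _ _ _ ih => exact ih hkj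
  | read2 | write2 | orElse1 | isolatedR => rfl
  | mcastAb _ _ ih₁ ih₂ =>
    rcases List.mem_append.1 hkj with h | h
    · exact absurd (ih₁ h) Label.noConfusion
    · exact absurd (ih₂ h) Label.noConfusion
  | mcastCo _ _ ih₁ ih₂ =>
    rcases List.mem_append.1 (List.mem_dedup.1 hkj) with h | h
    · exact absurd (ih₁ h) Label.noConfusion
    · exact absurd (ih₂ h) Label.noConfusion
  | refl | cons => trivial
  | _ => simp at hkj

namespace MergesRetireSource

variable {s₁ s₂ s₃ : MState} {ops₁ ops₂ : List Op}

lemma of_forall_not_mem (h : ∀ k j, Op.merge k j ∉ ops₁) :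
    MergesRetireSource s₁ ops₁ s₂ :=
  fun k j hkj => absurd hkj (h k j)

lemma append (h₁ : MergesRetireSource s₁ ops₁ s₂)
    (h₂ : MergesRetireSource s₂ ops₂ s₃)
    (f₁ : OnlyFreshNames s₁ s₂) (f₂ : OnlyFreshNames s₂ s₃) :
    MergesRetireSource s₁ (ops₁ ++ ops₂) s₃ := by
  have cross : ∀ k j j', Op.merge k j ∈ ops₁ → Op.merge k j' ∉ ops₂ :=
    fun k j j' hj hj' => (h₂ k j' hj').1 (h₁ k j hj).2.1
  intro k j hj
  rcases List.mem_append.1 hj with hj | hj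
  · obtain ⟨live, retired, uniq⟩ := h₁ k j hj
    refine ⟨live, f₂.retired retired, fun j' hj' => ?_⟩
    exact (List.mem_append.1 hj').elim (uniq j') fun h => absurd h (cross k j j' hj)
  · obtain ⟨live, retired, uniq⟩ := h₂ k j hj
    refine ⟨fun h => live (f₁.retired h), retired, fun j' hj' => ?_⟩
    exact (List.mem_append.1 hj').elim (fun h => absurd hj (cross k j' j h)) (uniq j')

lemma congr_threads {m m' : Mem} {P Q P' Q' : Family} {ops : List Op}
    (h : ∀ k, k ∈ Family.txNames P ↔ k ∈ Family.txNames Q)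
    (h' : ∀ k, k ∈ Family.txNames P' ↔ k ∈ Family.txNames Q')
    (hP : MergesRetireSource ⟨m, P⟩ ops ⟨m', P'⟩) :
    MergesRetireSource ⟨m, Q⟩ ops ⟨m', Q'⟩ := by
  simpa only [MergesRetireSource, Retired, occursIn_congr_threads h, occursIn_congr_threads h']
    using hP

lemma merge_cons {s s' : MState} {ops : List Op} {k j : TrName}
    (live : ¬ Retired k s) (retired : Retired k s') (hops : ∀ k j, Op.merge k j ∉ ops) :
    MergesRetireSource s (.merge k j :: ops) s' := by
  have merge_mem : ∀ {k' j'}, Op.merge k' j' ∈ Op.merge k j :: ops → k' = k ∧ j' = j :=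
    fun h => (List.mem_cons.1 h).elim (fun h => by simpa using h) fun h => absurd h (hops _ _)
  intro k' j' hj'
  obtain ⟨rfl, rfl⟩ := merge_mem hj'
  exact ⟨live, retired, fun j'' hj'' => (merge_mem hj'').2⟩

end MergesRetireSource

lemma NamesIssued.congr_threads {m : Mem} {P Q : Family}
    (h : ∀ k, k ∈ Family.txNames P ↔ k ∈ Family.txNames Q) (hQ : NamesIssued ⟨m, Q⟩) :
    NamesIssued ⟨m, P⟩ := by
  simpa only [NamesIssued, occursIn_congr_threads h] using hQ

theorem StepTauStar.onlyFreshNames {V : Term → Option Term} {s s' : MState} {ops : List Op}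
    (h : StepTauStar V s ops s') : OnlyFreshNames s s' := by
  induction h using StepTauStar.rec (motive_1 := fun _ _ _ _ _ => True) with
  | refl s => exact .refl s
  | cons h₁ _ _ ih => exact h₁.onlyFreshNames.trans ih
  | _ => trivial

theorem Step.mergesRetireSource {V : Term → Option Term} {s s' : MState} {β : Label}
    {ops : List Op} (h : Step V s β ops s') (hs : NamesIssued s) :
    MergesRetireSource s ops s' := by
  induction h using Step.rec
    (motive_2 := fun s ops s' _ => NamesIssued s → MergesRetireSource s ops s') with
  | permC hPQ hPQ' _ ih =>
    exact (ih (hs.congr_threads fun _ => (hPQ.filterMap _).mem_iff)).congr_threads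
      (fun _ => (hPQ.filterMap _).mem_iff) fun _ => (hPQ'.filterMap _).mem_iff
  | @read2 m P E t k j _ N r =>
    split_ifs with hkj
    · exact .of_forall_not_mem (by simp)
    have hk : OccursIn k ⟨m, .tx t (plug E (.readOTVar r)) N k :: P⟩ := .inl (by simp)
    exact .merge_cons (fun h => h.2 hk) ⟨hs k hk, not_occursIn_rename (Ne.symm hkj)⟩ (by simp)
  | @write2 m P E t k j M _ N r =>
    split_ifs with hkj
    · exact .of_forall_not_mem (by simp)
    have hk : OccursIn k ⟨m, .tx t (plug E (.writeOTVar r M)) N k :: P⟩ := .inl (by simp)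
    refine .merge_cons (fun h => h.2 hk) ⟨hs k hk, fun h => ?_⟩ (by simp)
    rcases occursIn_updFn (m := {m with work := renameWork m.work k j}) h with h | h
    exacts [hkj h, not_occursIn_rename (Ne.symm hkj) h]
  | orElse1 _ _ ih | isolatedR _ _ ih =>
    exact (ih (hs.congr_threads fun _ => Iff.rfl)).congr_threads (fun _ => Iff.rfl) (by simp)
  | mcastAb h₁ h₂ =>
    exact .of_forall_not_mem fun _ _ hkj =>
      Label.noConfusion ((Step.mcastAb h₁ h₂).eq_tau_of_merge_mem hkj)
  | mcastCo h₁ h₂ =>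
    exact .of_forall_not_mem fun _ _ hkj =>
      Label.noConfusion ((Step.mcastCo h₁ h₂).eq_tau_of_merge_mem hkj)
  | mcastGroup h₁ hβ =>
    refine .of_forall_not_mem fun _ _ hkj => ?_
    rw [h₁.eq_tau_of_merge_mem hkj] at hβ
    simp [Label.txName] at hβ
  | cons h₁ h₂ ih₁ ih₂ hs =>
    have f₁ := h₁.onlyFreshNames
    exact (ih₁ hs).append (ih₂ (f₁.namesIssued hs)) f₁ h₂.onlyFreshNames
  | _ => exact .of_forall_not_mem (by simp)

namespace Exec

variable {V : Term → Option Term} {s s' : MState} {H : History}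

theorem onlyFreshNames (h : Exec V s H s') : OnlyFreshNames s s' := by
  induction h with
  | refl s => exact .refl s
  | step hstep _ ih => exact hstep.onlyFreshNames.trans ih

theorem mergesRetireSource (h : Exec V s H s') (hs : NamesIssued s) :
    MergesRetireSource s H s' := by
  induction h with
  | refl => exact .of_forall_not_mem fun _ _ => List.not_mem_nil
  | step hstep hexec ih =>
    have f := hstep.onlyFreshNames
    exact (hstep.mergesRetireSource hs).append (ih (f.namesIssued hs)) f hexec.onlyFreshNames

end Exec

lemma namesIssued_initState (M : Term) (t : TId) : NamesIssued (initState M t) := by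
  rintro k (hk | ⟨r, M', hr⟩)
  · simp [initState] at hk
  · simp [initState] at hr

/-- Each transaction name can be the source of at most one merge: once a
    `Read2` or `Write2` transition (the only transitions issuing merges)
    merges transaction `k` into transaction `j` (renaming every occurrence of
    `k` in the working memory and in the thread family to `j`, with `j ≠ k`),
    the name `k` no longer occurs in any subsequent state of the execution,
    and hence no later transition can merge `k` into any transaction.
    Consequently, in the opacity graph of the history of any execution,
    every vertex has at most one outgoing merge-induced edge. -/
theorem otm_merge_at_most_once (V : Term → Option Term) (M₀ : Term) (t₀ : TId) :
    (∀ H₁ s, Exec V (initState M₀ t₀) H₁ s →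
      ∀ β ops s₁, Step V s β ops s₁ →
        ∀ k j, j ≠ k → Op.merge k j ∈ ops →
          -- `k` is gone right after the merging transition …
          ¬ OccursIn k s₁ ∧
          -- … and in every subsequent state; no later transition merges `k`
          ∀ H₂ s₂, Exec V s₁ H₂ s₂ →
            (∀ j', Op.merge k j' ∉ H₂) ∧ ¬ OccursIn k s₂) ∧
    -- at most one outgoing merge-induced edge per vertex
    (∀ H s, Exec V (initState M₀ t₀) H s →
      ∀ k j j', Op.merge k j ∈ H → Op.merge k j' ∈ H → j = j') := by
  have init := namesIssued_initState M₀ t₀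
  refine ⟨fun H₁ s hexec β ops s₁ hstep k j _ hkj => ?_, fun H s hexec k j j' hj hj' => ?_⟩
  · have hs := hexec.onlyFreshNames.namesIssued init
    have retired : Retired k s₁ := (hstep.mergesRetireSource hs k j hkj).2.1
    refine ⟨retired.2, fun H₂ s₂ hexec₂ => ⟨fun j' hj' => ?_, ?_⟩⟩
    · exact (hexec₂.mergesRetireSource (hstep.onlyFreshNames.namesIssued hs) k j' hj').1 retired
    · exact (hexec₂.onlyFreshNames.retired retired).2
  · exact (hexec.mergesRetireSource init k j' hj').2.2 j hj
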